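/- Let a, b, c, λ₁, λ₂, λ₃ ∈ ℂ be roots of unity satisfying −a + 2b + 2c + 3λ₁ + 3λ₂ + 3λ₃ = 0. Then exactly one of the following two situations occurs: (i) a = b = c, and there exists a root of unity ε such that the multiset {λ₁, λ₂, λ₃} equals {ε, −ε, −a}; or (ii) there exists a root of unity η such that a = η, {b, c} = {η·ω, η·ω²} as an unordered pair, and there exists a root of unity ε with the multiset {λ₁, λ₂, λ₃} equal to {ε, −ε, η}. -/

import Mathlib

/-- `z` is a root of unity. -/
def IsRootOfUnity (z : ℂ) : Prop := ∃ n : ℕ, 0 < n ∧ z ^ n = 1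

/-- `ω = e^{2πi/3}`. -/
noncomputable def ω : ℂ := Complex.exp (2 * Real.pi * Complex.I / 3)

/-! `m = (a + b + c) / 3 = b + c + λ₁ + λ₂ + λ₃` is an algebraic integer, and each of its conjugates
is again the average of three roots of unity, so lies in the closed unit disc. By Kronecker's
theorem `m` is `0` or a root of unity. If `|a + b + c| = 3`, strict convexity forces `a = b = c`;
if `a + b + c = 0`, the three unit vectors form an equilateral triangle, `{b, c} = {aω, aω²}`.
Either way `λ₁ + λ₂ + λ₃ ± a = 0`, and four unit vectors with zero sum cancel in pairs. -/

open Complex ComplexConjugate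

theorem isRootOfUnity_iff_isOfFinOrder {z : ℂ} : IsRootOfUnity z ↔ IsOfFinOrder z :=
  isOfFinOrder_iff_pow_eq_one.symm

theorem IsOfFinOrder.isIntegral {R A : Type*} [CommRing R] [Ring A] [Algebra R A] {x : A}
    (hx : IsOfFinOrder x) : IsIntegral R x := by
  obtain ⟨n, hn, hxn⟩ := isOfFinOrder_iff_pow_eq_one.mp hx
  exact IsIntegral.of_pow hn (hxn ▸ isIntegral_one)

theorem IsOfFinOrder.neg {R : Type*} [Ring R] {x : R} (hx : IsOfFinOrder x) :
    IsOfFinOrder (-x) := by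
  rw [neg_eq_neg_one_mul]
  exact (Commute.neg_one_left x).isOfFinOrder_mul
    (isOfFinOrder_iff_pow_eq_one.mpr ⟨2, two_pos, by norm_num⟩) hx

theorem isPrimitiveRoot_omega : IsPrimitiveRoot ω 3 := by
  simpa [ω] using isPrimitiveRoot_exp 3 (by norm_num)

theorem one_add_omega_add_omega_sq : 1 + ω + ω ^ 2 = 0 := by
  simpa [Finset.sum_range_succ] using isPrimitiveRoot_omega.geom_sum_eq_zero (by norm_num)

theorem mul_omega_ne_self {a : ℂ} (ha : a ≠ 0) : a * ω ≠ a := by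
  rw [Ne, mul_eq_left₀ ha]
  exact isPrimitiveRoot_omega.ne_one (by norm_num)

theorem mul_omega_sq_ne_self {a : ℂ} (ha : a ≠ 0) : a * ω ^ 2 ≠ a := by
  rw [Ne, mul_eq_left₀ ha]
  exact isPrimitiveRoot_omega.pow_ne_one_of_pos_of_lt two_ne_zero (by norm_num)

theorem eq_and_eq_of_norm_add_add_eq {E : Type*} [NormedAddCommGroup E] [NormedSpace ℝ E]
    [StrictConvexSpace ℝ E] {a b c : E} (hab : ‖a‖ = ‖b‖) (hbc : ‖b‖ = ‖c‖)
    (h : ‖a + b + c‖ = ‖a‖ + ‖b‖ + ‖c‖) : a = b ∧ b = c := by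
  have h₁ := norm_add_le (a + b) c
  have h₂ := norm_add_le a b
  have h₃ := norm_add_le a (b + c)
  have h₄ := norm_add_le b c
  rw [← add_assoc] at h₃
  exact ⟨eq_of_norm_eq_of_norm_add_eq hab (by linarith),
    eq_of_norm_eq_of_norm_add_eq hbc (by linarith)⟩

theorem Complex.mul_conj_eq_one {z : ℂ} (hz : ‖z‖ = 1) : z * conj z = 1 := by
  rw [mul_conj', hz]; norm_num

theorem mul_add_mul_add_mul_eq_zero_of_norm_eq_one {a b c : ℂ} (ha : ‖a‖ = 1) (hb : ‖b‖ = 1)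
    (hc : ‖c‖ = 1) (h : a + b + c = 0) : a * b + b * c + c * a = 0 := by
  have hconj : conj a + conj b + conj c = 0 := by simpa using congrArg conj h
  linear_combination a * b * c * hconj - b * c * mul_conj_eq_one ha
    - c * a * mul_conj_eq_one hb - a * b * mul_conj_eq_one hc

theorem eq_mul_omega_of_add_add_eq_zero {a b c : ℂ} (ha : ‖a‖ = 1) (hb : ‖b‖ = 1)
    (hc : ‖c‖ = 1) (h : a + b + c = 0) :
    (b = a * ω ∧ c = a * ω ^ 2) ∨ (b = a * ω ^ 2 ∧ c = a * ω) := by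
  have hω := one_add_omega_add_omega_sq
  have hω3 := isPrimitiveRoot_omega.pow_eq_one
  have hfactor : (b - a * ω) * (b - a * ω ^ 2) = 0 := by
    linear_combination -mul_add_mul_add_mul_eq_zero_of_norm_eq_one ha hb hc h
      + (a + b) * h - a * b * hω + a ^ 2 * hω3
  rcases mul_eq_zero.mp hfactor with hb' | hb'
  · exact Or.inl ⟨by linear_combination hb', by linear_combination h - hb' - a * hω⟩
  · exact Or.inr ⟨by linear_combination hb', by linear_combination h - hb' - a * hω⟩

-- `(x + w)(y + w)(z + w) = w² e₁ + e₃`, and conjugating `e₁ = 0` gives `e₃ = 0`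
-- because `conj z = z⁻¹` on the unit circle.
theorem add_mul_add_mul_add_eq_zero_of_norm_eq_one {x y z w : ℂ} (hx : ‖x‖ = 1) (hy : ‖y‖ = 1)
    (hz : ‖z‖ = 1) (hw : ‖w‖ = 1) (h : x + y + z + w = 0) :
    (x + w) * (y + w) * (z + w) = 0 := by
  have hconj : conj x + conj y + conj z + conj w = 0 := by simpa using congrArg conj h
  linear_combination w ^ 2 * h + x * y * z * w * hconj - y * z * w * mul_conj_eq_one hx
    - x * z * w * mul_conj_eq_one hy - x * y * w * mul_conj_eq_one hz
    - x * y * z * mul_conj_eq_one hw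

theorem multiset_eq_of_add_add_add_eq_zero {x y z w : ℂ} (hx : ‖x‖ = 1) (hy : ‖y‖ = 1)
    (hz : ‖z‖ = 1) (hw : ‖w‖ = 1) (h : x + y + z + w = 0) :
    ({x, y, z} : Multiset ℂ) = {x, -x, -w} ∨ ({x, y, z} : Multiset ℂ) = {y, -y, -w} := by
  rcases mul_eq_zero.mp (add_mul_add_mul_add_eq_zero_of_norm_eq_one hx hy hz hw h) with h' | h'
  rcases mul_eq_zero.mp h' with h' | h'
  · right
    rw [show x = -w by linear_combination h', show z = -y by linear_combination h - h',
      Multiset.insert_eq_cons, Multiset.insert_eq_cons, Multiset.cons_swap,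
      Multiset.pair_comm (-y)]
    rfl
  · left
    rw [show y = -w by linear_combination h', show z = -x by linear_combination h - h',
      Multiset.pair_comm]
  · left
    rw [show z = -w by linear_combination h', show y = -x by linear_combination h - h']

theorem NumberField.average_eq_zero_or_isOfFinOrder {K : Type*} [Field K] [NumberField K]
    {a b c : K} (ha : IsOfFinOrder a) (hb : IsOfFinOrder b) (hc : IsOfFinOrder c)
    (hint : IsIntegral ℤ ((a + b + c) / 3)) :
    (a + b + c) / 3 = 0 ∨ IsOfFinOrder ((a + b + c) / 3) := by
  have hbound : ∀ φ : K →+* ℂ, ‖φ ((a + b + c) / 3)‖ ≤ 1 := by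
    intro φ
    have hnorm : ∀ x : K, IsOfFinOrder x → ‖φ x‖ = 1 := fun x hx =>
      (φ.toMonoidHom.isOfFinOrder hx).norm_eq_one
    have : ‖φ a + φ b + φ c‖ ≤ ‖φ a‖ + ‖φ b‖ + ‖φ c‖ := norm_add₃_le
    rw [hnorm a ha, hnorm b hb, hnorm c hc] at this
    rw [map_div₀, map_add, map_add, map_ofNat, norm_div, Complex.norm_ofNat]
    linarith
  refine or_iff_not_imp_left.mpr fun h0 => isOfFinOrder_iff_pow_eq_one.mpr ?_
  obtain ⟨n, hn, hpow⟩ := NumberField.Embeddings.pow_eq_one_of_norm_le_one K ℂ h0 hint hbound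
  exact ⟨n, hn, hpow⟩

theorem average_eq_zero_or_isOfFinOrder {a b c : ℂ} (ha : IsOfFinOrder a) (hb : IsOfFinOrder b)
    (hc : IsOfFinOrder c) (hint : IsIntegral ℤ ((a + b + c) / 3)) :
    (a + b + c) / 3 = 0 ∨ IsOfFinOrder ((a + b + c) / 3) := by
  let F := IntermediateField.adjoin ℚ ({a, b, c} : Set ℂ)
  have : FiniteDimensional ℚ F := IntermediateField.finiteDimensional_adjoin <| by
    rintro x (rfl | rfl | rfl) <;> exact IsOfFinOrder.isIntegral ‹_›
  have : NumberField F := ⟨⟩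
  have hinj : Function.Injective F.val.toMonoidHom := Subtype.val_injective
  let a' : F := ⟨a, IntermediateField.subset_adjoin ℚ _ (by simp)⟩
  let b' : F := ⟨b, IntermediateField.subset_adjoin ℚ _ (by simp)⟩
  let c' : F := ⟨c, IntermediateField.subset_adjoin ℚ _ (by simp)⟩
  have hcoe : (((a' + b' + c') / 3 : F) : ℂ) = (a + b + c) / 3 := by push_cast; rfl
  rw [← hcoe, IntermediateField.coe_isIntegral_iff] at hint
  rw [← hcoe]
  refine (NumberField.average_eq_zero_or_isOfFinOrder ((hinj.isOfFinOrder_iff (x := a')).mp ha)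
    ((hinj.isOfFinOrder_iff (x := b')).mp hb) ((hinj.isOfFinOrder_iff (x := c')).mp hc) hint).imp
    (fun h => by rw [h]; rfl) F.val.toMonoidHom.isOfFinOrder

theorem add_add_eq_zero_or_eq_and_eq {a b c : ℂ} (ha : IsOfFinOrder a) (hb : IsOfFinOrder b)
    (hc : IsOfFinOrder c) (hint : IsIntegral ℤ ((a + b + c) / 3)) :
    a + b + c = 0 ∨ (a = b ∧ b = c) := by
  refine (average_eq_zero_or_isOfFinOrder ha hb hc hint).imp (by simpa using ·) fun hunit => ?_
  have hnorm : ‖a + b + c‖ = 3 := by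
    have := hunit.norm_eq_one
    rwa [norm_div, Complex.norm_ofNat, div_eq_one_iff_eq three_ne_zero] at this
  refine eq_and_eq_of_norm_add_add_eq (ha.norm_eq_one.trans hb.norm_eq_one.symm)
    (hb.norm_eq_one.trans hc.norm_eq_one.symm) ?_
  rw [hnorm, ha.norm_eq_one, hb.norm_eq_one, hc.norm_eq_one]
  norm_num

/-- If roots of unity `a, b, c, λ₁, λ₂, λ₃` satisfy
`−a + 2b + 2c + 3λ₁ + 3λ₂ + 3λ₃ = 0`, then exactly one of the two listed
situations occurs. -/
theorem stmt6 (a b c l1 l2 l3 : ℂ)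
    (ha : IsRootOfUnity a) (hb : IsRootOfUnity b) (hc : IsRootOfUnity c)
    (h1 : IsRootOfUnity l1) (h2 : IsRootOfUnity l2) (h3 : IsRootOfUnity l3)
    (heq : -a + 2 * b + 2 * c + 3 * l1 + 3 * l2 + 3 * l3 = 0) :
    Xor'
      (a = b ∧ b = c ∧
        ∃ ε : ℂ, IsRootOfUnity ε ∧ ({l1, l2, l3} : Multiset ℂ) = {ε, -ε, -a})
      (∃ η : ℂ, IsRootOfUnity η ∧ a = η ∧
        ((b = η * ω ∧ c = η * ω ^ 2) ∨ (b = η * ω ^ 2 ∧ c = η * ω)) ∧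
        ∃ ε : ℂ, IsRootOfUnity ε ∧ ({l1, l2, l3} : Multiset ℂ) = {ε, -ε, η}) := by
  simp only [isRootOfUnity_iff_isOfFinOrder] at ha hb hc h1 h2 h3 ⊢
  have hint : IsIntegral ℤ ((a + b + c) / 3) := by
    rw [show (a + b + c) / 3 = b + c + l1 + l2 + l3 by linear_combination -heq / 3]
    exact (((hb.isIntegral.add hc.isIntegral).add h1.isIntegral).add h2.isIntegral).add
      h3.isIntegral
  have hexcl : a = b → ¬((b = a * ω ∧ c = a * ω ^ 2) ∨ (b = a * ω ^ 2 ∧ c = a * ω)) := by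
    rintro hab (⟨hb', -⟩ | ⟨hb', -⟩)
    exacts [mul_omega_ne_self ha.isUnit.ne_zero (hb'.symm.trans hab.symm),
      mul_omega_sq_ne_self ha.isUnit.ne_zero (hb'.symm.trans hab.symm)]
  rcases add_add_eq_zero_or_eq_and_eq ha hb hc hint with hsum | ⟨hab, hbc⟩
  · have hl : l1 + l2 + l3 + -a = 0 := by linear_combination heq / 3 - 2 / 3 * hsum
    have hbc := eq_mul_omega_of_add_add_eq_zero ha.norm_eq_one hb.norm_eq_one hc.norm_eq_one hsum
    refine Or.inr ⟨⟨a, ha, rfl, hbc, ?_⟩, fun ⟨hab, _⟩ => hexcl hab hbc⟩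
    rcases multiset_eq_of_add_add_add_eq_zero h1.norm_eq_one h2.norm_eq_one h3.norm_eq_one
      ha.neg.norm_eq_one hl with h | h <;> rw [neg_neg] at h
    exacts [⟨l1, h1, h⟩, ⟨l2, h2, h⟩]
  · have hl : l1 + l2 + l3 + a = 0 := by
      linear_combination heq / 3 + 4 / 3 * hab + 2 / 3 * hbc
    refine Or.inl ⟨⟨hab, hbc, ?_⟩, fun ⟨η, _, haη, hbη, _⟩ => hexcl hab (haη ▸ hbη)⟩
    rcases multiset_eq_of_add_add_add_eq_zero h1.norm_eq_one h2.norm_eq_one h3.norm_eq_one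
      ha.norm_eq_one hl with h | h
    exacts [⟨l1, h1, h⟩, ⟨l2, h2, h⟩]
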